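/- arXiv:2601.04937 — 8 statements merged into one kernel-verified Lean document; each statement's English description precedes it below -/
import Mathlib

section
/- Let a0, a1, a2, b0, b1, b2, λ be real numbers and set A(x) = a0·x² + a1·x + a2 and B(y) = b0·y² + b1·y + b2. Then for all real x, y one has E(A,B,λ)(x,y) = 2(a0+b0)(a2+b2) − (1/2)(a1+b1)² − 2λ². In particular, E(A,B,λ) vanishes identically if and only if 4(a0+b0)(a2+b2) − (a1+b1)² = 4λ². -/
/-- The orthotoric expression `E(A,B,λ)(x,y)` associated to profile functions
`A, B : ℝ → ℝ` and a real parameter `λ`:  it equals `(x-y)⁴` times the operator `𝒮`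
of the Bismut-Ricci-flat equation evaluated on the orthotoric Kähler ansatz. -/
noncomputable def orthoE (A B : ℝ → ℝ) (lam : ℝ) (x y : ℝ) : ℝ :=
  ((x - y) ^ 2 / 2) *
      (deriv (fun t => A t * deriv^[3] A t) x + deriv (fun t => B t * deriv^[3] B t) y +
        deriv^[2] A x * deriv^[2] B y) -
    (x - y) *
      (A x * deriv^[3] A x - B y * deriv^[3] B y + deriv A x * deriv^[2] B y -
        deriv B y * deriv^[2] A x) +
    (A x + B y) * (deriv^[2] A x + deriv^[2] B y) -
    (1 / 2) * (deriv A x + deriv B y) ^ 2 - 2 * lam ^ 2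

section QuadraticDerivatives

variable (a b c : ℝ)

theorem deriv_quadratic :
    deriv (fun x : ℝ => a * x ^ 2 + b * x + c) = fun x => 2 * a * x + b := by
  funext x
  refine (((((hasDerivAt_pow 2 x).const_mul a).add
    ((hasDerivAt_id x).const_mul b)).add_const c).congr_deriv ?_).deriv
  push_cast
  ring

theorem deriv_iterate_two_quadratic :
    deriv^[2] (fun x : ℝ => a * x ^ 2 + b * x + c) = fun _ => 2 * a := by
  funext x
  rw [Function.iterate_succ_apply', Function.iterate_one, deriv_quadratic]
  simp

theorem deriv_iterate_three_quadratic :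
    deriv^[3] (fun x : ℝ => a * x ^ 2 + b * x + c) = 0 := by
  rw [Function.iterate_succ_apply', deriv_iterate_two_quadratic]
  exact funext fun _ => deriv_const _ _

end QuadraticDerivatives

theorem orthoE_quadratic (a0 a1 a2 b0 b1 b2 lam x y : ℝ) :
    orthoE (fun x => a0 * x ^ 2 + a1 * x + a2) (fun y => b0 * y ^ 2 + b1 * y + b2) lam x y
      = 2 * (a0 + b0) * (a2 + b2) - (1 / 2) * (a1 + b1) ^ 2 - 2 * lam ^ 2 := by
  simp only [orthoE, deriv_iterate_three_quadratic, deriv_iterate_two_quadratic,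
    deriv_quadratic, Pi.zero_apply, mul_zero, deriv_const']
  ring

theorem stmt_0 (a0 a1 a2 b0 b1 b2 lam : ℝ) (A B : ℝ → ℝ)
    (hA : ∀ x, A x = a0 * x ^ 2 + a1 * x + a2)
    (hB : ∀ y, B y = b0 * y ^ 2 + b1 * y + b2) :
    (∀ x y : ℝ, orthoE A B lam x y
        = 2 * (a0 + b0) * (a2 + b2) - (1 / 2) * (a1 + b1) ^ 2 - 2 * lam ^ 2) ∧
    ((∀ x y : ℝ, orthoE A B lam x y = 0) ↔
        4 * (a0 + b0) * (a2 + b2) - (a1 + b1) ^ 2 = 4 * lam ^ 2) := by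
  obtain rfl : A = _ := funext hA
  obtain rfl : B = _ := funext hB
  refine ⟨orthoE_quadratic a0 a1 a2 b0 b1 b2 lam, fun h => ?_, fun h x y => ?_⟩
  · linarith [h 0 0, orthoE_quadratic a0 a1 a2 b0 b1 b2 lam 0 0]
  · linarith [orthoE_quadratic a0 a1 a2 b0 b1 b2 lam x y]
end

section
/- Let A and B be polynomials with real coefficients, regarded as functions ℝ → ℝ, and let λ ∈ ℝ. If E(A,B,λ)(x,y) = 0 for all real x and y, then both A and B have degree at most 2. -/
open Polynomial

theorem orthoE_swap (A B : ℝ → ℝ) (lam x y : ℝ) :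
    orthoE A B lam x y = orthoE B A lam y x := by
  unfold orthoE
  ring

theorem Polynomial.iterate_deriv_eval {𝕜 : Type*} [NontriviallyNormedField 𝕜] (p : 𝕜[X])
    (k : ℕ) : deriv^[k] (fun x => p.eval x) = fun x => (derivative^[k] p).eval x := by
  induction k with
  | zero => rfl
  | succ k ih =>
    rw [Function.iterate_succ_apply', ih, Function.iterate_succ_apply']
    ext x
    exact Polynomial.deriv _

theorem Polynomial.coeff_mul_of_natDegree_le_of_add_eq {R : Type*} [Semiring R] {p q : R[X]}
    {a b n : ℕ} (hp : p.natDegree ≤ a) (hq : q.natDegree ≤ b) (hn : a + b = n) :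
    (p * q).coeff n = p.coeff a * q.coeff b :=
  hn ▸ coeff_mul_add_eq_of_natDegree_le hp hq

/-- The terms of `x ↦ orthoE A B λ x 0` that are quadratic in `A`. -/
noncomputable def orthoQuadPart (A : ℝ[X]) : ℝ[X] :=
  C (1 / 2) * X ^ 2 * derivative (A * derivative^[3] A) - X * (A * derivative^[3] A) +
    A * derivative^[2] A - C (1 / 2) * derivative A ^ 2

theorem exists_orthoE_eq_orthoQuadPart_add (A B : ℝ[X]) (lam : ℝ) :
    ∃ R : ℝ[X], R.natDegree ≤ max A.natDegree 2 ∧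
      ∀ x, orthoE (fun x => A.eval x) (fun y => B.eval y) lam x 0 =
        (orthoQuadPart A + R).eval x := by
  set b : ℕ → ℝ := fun k => (derivative^[k] B).eval 0
  refine ⟨C (1 / 2) * X ^ 2 * (C ((derivative (B * derivative^[3] B)).eval 0) +
      C (b 2) * derivative^[2] A) -
    X * (C (b 2) * derivative A - C (b 1) * derivative^[2] A - C (b 0 * b 3)) +
    C (b 2) * A + C (b 0) * derivative^[2] A - C (b 1) * derivative A +
    C (b 0 * b 2 - b 1 ^ 2 / 2 - 2 * lam ^ 2), ?_, fun x => ?_⟩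
  · simp only [Function.iterate_succ_apply', Function.iterate_zero_apply]
    compute_degree
    omega
  · have hmul (p q : ℝ[X]) : (fun t => p.eval t * q.eval t) = fun t => (p * q).eval t := by
      simp
    simp only [orthoE, orthoQuadPart, Polynomial.iterate_deriv_eval, hmul, Polynomial.deriv, b,
      Function.iterate_one, Function.iterate_zero_apply,
      eval_add, eval_sub, eval_mul, eval_pow, eval_C, eval_X]
    ring

theorem coeff_orthoQuadPart {A : ℝ[X]} {m : ℕ} (hA : A.natDegree ≤ m + 3) :
    (orthoQuadPart A).coeff (2 * m + 4) =
      A.coeff (m + 3) ^ 2 * ((m + 3) * (m + 1) ^ 2 * (2 * m + 3) / 2) := by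
  set c := A.coeff (m + 3)
  have hA₁ : (derivative A).natDegree ≤ m + 2 :=
    (natDegree_derivative_le A).trans (by omega)
  have hA₂ : (derivative^[2] A).natDegree ≤ m + 1 :=
    (natDegree_iterate_derivative A 2).trans (by omega)
  have hA₃ : (derivative^[3] A).natDegree ≤ m :=
    (natDegree_iterate_derivative A 3).trans (by omega)
  have cA₁ : (derivative A).coeff (m + 2) = (m + 3) * c := by
    rw [coeff_derivative]; push_cast; ring
  have cA₂ : (derivative^[2] A).coeff (m + 1) = (m + 3) * (m + 2) * c := by
    rw [coeff_iterate_derivative, nsmul_eq_mul]; push_cast [Nat.descFactorial]; ring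
  have cA₃ : (derivative^[3] A).coeff m = (m + 3) * (m + 2) * (m + 1) * c := by
    rw [coeff_iterate_derivative, nsmul_eq_mul]; push_cast [Nat.descFactorial]; ring
  have cP : (A * derivative^[3] A).coeff (2 * m + 3) = (m + 3) * (m + 2) * (m + 1) * c ^ 2 := by
    rw [coeff_mul_of_natDegree_le_of_add_eq hA hA₃ (by omega), cA₃]; ring
  have cDP : (derivative (A * derivative^[3] A)).coeff (2 * m + 2) =
      (2 * m + 3) * (m + 3) * (m + 2) * (m + 1) * c ^ 2 := by
    rw [coeff_derivative, cP]; push_cast; ring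
  have cX2DP : (X ^ 2 * derivative (A * derivative^[3] A)).coeff (2 * m + 4) =
      (2 * m + 3) * (m + 3) * (m + 2) * (m + 1) * c ^ 2 := by
    rw [show 2 * m + 4 = 2 * m + 2 + 2 by omega, coeff_X_pow_mul, cDP]
  have cXP : (X * (A * derivative^[3] A)).coeff (2 * m + 4) =
      (m + 3) * (m + 2) * (m + 1) * c ^ 2 := by
    rw [show 2 * m + 4 = 2 * m + 3 + 1 by omega, coeff_X_mul, cP]
  have cAA₂ : (A * derivative^[2] A).coeff (2 * m + 4) = (m + 3) * (m + 2) * c ^ 2 := by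
    rw [coeff_mul_of_natDegree_le_of_add_eq hA hA₂ (by omega), cA₂]; ring
  have cA₁sq : (derivative A ^ 2).coeff (2 * m + 4) = (m + 3) ^ 2 * c ^ 2 := by
    rw [sq, coeff_mul_of_natDegree_le_of_add_eq hA₁ hA₁ (by omega), cA₁]; ring
  simp only [orthoQuadPart, coeff_sub, coeff_add, coeff_C_mul, mul_assoc, cX2DP, cXP, cAA₂, cA₁sq]
  ring

theorem natDegree_le_two_of_orthoE_eq_zero (A B : ℝ[X]) (lam : ℝ)
    (h : ∀ x y, orthoE (fun x => A.eval x) (fun y => B.eval y) lam x y = 0) :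
    A.natDegree ≤ 2 := by
  by_contra! hA
  obtain ⟨m, hm⟩ : ∃ m, A.natDegree = m + 3 := ⟨A.natDegree - 3, by omega⟩
  obtain ⟨R, hR, hE⟩ := exists_orthoE_eq_orthoQuadPart_add A B lam
  have hzero : orthoQuadPart A + R = 0 := Polynomial.funext fun x => by simp [← hE, h]
  have htop := congrArg (coeff · (2 * m + 4)) hzero
  have hRtop : R.coeff (2 * m + 4) = 0 := coeff_eq_zero_of_natDegree_lt (by omega)
  simp only [coeff_add, coeff_orthoQuadPart hm.le, hRtop, coeff_zero, add_zero] at htop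
  have hc : A.coeff (m + 3) ≠ 0 := by
    rw [← hm, coeff_natDegree, leadingCoeff_ne_zero]
    rintro rfl
    simp at hm
  have : A.coeff (m + 3) ^ 2 * ((m + 3) * (m + 1) ^ 2 * (2 * m + 3) / 2) ≠ 0 := by positivity
  exact this htop

theorem stmt_1 (A B : Polynomial ℝ) (lam : ℝ)
    (h : ∀ x y : ℝ, orthoE (fun x => A.eval x) (fun y => B.eval y) lam x y = 0) :
    A.natDegree ≤ 2 ∧ B.natDegree ≤ 2 :=
  ⟨natDegree_le_two_of_orthoE_eq_zero A B lam h,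
    natDegree_le_two_of_orthoE_eq_zero B A lam fun x y => by rw [orthoE_swap, h]⟩
end

section
/- Let A be a real polynomial of degree k ≥ 3 with leading coefficient a0, let B be any real polynomial, let λ ∈ ℝ, and fix y0 ∈ ℝ. Then the function x ↦ E(A,B,λ)(x,y0) is a polynomial function of x of degree exactly 2k−2, whose coefficient of x^{2k−2} equals (k·(k−2)²·(2k−3)/2)·a0². -/
open Polynomial

namespace Polynomial

theorem iterate_deriv_eval_s2 {𝕜 : Type*} [NontriviallyNormedField 𝕜] (p : 𝕜[X]) (n : ℕ) :
    deriv^[n] (fun x => p.eval x) = fun x => (derivative^[n] p).eval x := by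
  induction n with
  | zero => rfl
  | succ n ih =>
    rw [Function.iterate_succ_apply', Function.iterate_succ_apply', ih]
    funext x
    exact (derivative^[n] p).deriv

/-- Unlike `natDegree` and `leadingCoeff`, this pair of data is compatible with `+`, `*` and
`derivative`, because `c` is allowed to vanish. -/
def HasTopCoeff {R : Type*} [Semiring R] (p : R[X]) (n : ℕ) (c : R) : Prop :=
  p.natDegree ≤ n ∧ p.coeff n = c

namespace HasTopCoeff

section Semiring

variable {R : Type*} [Semiring R] {p q : R[X]} {m n k : ℕ} {a b : R}

theorem natDegree_eq (h : p.HasTopCoeff n a) (ha : a ≠ 0) : p.natDegree = n :=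
  h.1.antisymm (le_natDegree_of_ne_zero (h.2 ▸ ha))

theorem of_lt (h : p.HasTopCoeff m a) (hmn : m < n) : p.HasTopCoeff n 0 :=
  ⟨h.1.trans hmn.le, coeff_eq_zero_of_natDegree_lt (h.1.trans_lt hmn)⟩

theorem add (hp : p.HasTopCoeff n a) (hq : q.HasTopCoeff n b) : (p + q).HasTopCoeff n (a + b) :=
  ⟨natDegree_add_le_of_degree_le hp.1 hq.1, by rw [coeff_add, hp.2, hq.2]⟩

theorem mul (hp : p.HasTopCoeff m a) (hq : q.HasTopCoeff n b) (hk : m + n = k) :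
    (p * q).HasTopCoeff k (a * b) := by
  subst hk
  exact ⟨natDegree_mul_le_of_le hp.1 hq.1,
    by rw [coeff_mul_add_eq_of_natDegree_le hp.1 hq.1, hp.2, hq.2]⟩

theorem pow (h : p.HasTopCoeff n a) (m : ℕ) : (p ^ m).HasTopCoeff (m * n) (a ^ m) :=
  ⟨natDegree_pow_le_of_le m h.1, by rw [coeff_pow_of_natDegree_le h.1, h.2]⟩

theorem C_mul (h : p.HasTopCoeff n a) (b : R) : (C b * p).HasTopCoeff n (b * a) :=
  ⟨natDegree_C_mul_le b p |>.trans h.1, by rw [coeff_C_mul, h.2]⟩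

theorem derivative (h : p.HasTopCoeff (n + 1) a) : (derivative p).HasTopCoeff n (a * (n + 1)) :=
  ⟨(natDegree_derivative_le p).trans (Nat.sub_le_of_le_add h.1), by rw [coeff_derivative, h.2]⟩

end Semiring

theorem sub {R : Type*} [Ring R] {p q : R[X]} {n : ℕ} {a b : R} (hp : p.HasTopCoeff n a)
    (hq : q.HasTopCoeff n b) : (p - q).HasTopCoeff n (a - b) :=
  ⟨(natDegree_sub_le_of_le hp.1 hq.1).trans (max_self n).le, by rw [coeff_sub, hp.2, hq.2]⟩

end HasTopCoeff

theorem hasTopCoeff_C {R : Type*} [Semiring R] (c : R) : (C c).HasTopCoeff 0 c :=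
  ⟨(natDegree_C c).le, coeff_C_zero⟩

theorem hasTopCoeff_X_sub_C {R : Type*} [Ring R] [Nontrivial R] (c : R) :
    (X - C c).HasTopCoeff 1 1 :=
  ⟨(natDegree_X_sub_C c).le, by simp⟩

end Polynomial

noncomputable def orthoEPoly (A B : ℝ[X]) (lam y0 : ℝ) : ℝ[X] :=
  C (1 / 2) * ((X - C y0) ^ 2 *
      (derivative (A * derivative^[3] A) + C ((derivative (B * derivative^[3] B)).eval y0) +
        derivative^[2] A * C ((derivative^[2] B).eval y0))) -
    (X - C y0) *
      (A * derivative^[3] A - C (B.eval y0 * (derivative^[3] B).eval y0) +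
        derivative A * C ((derivative^[2] B).eval y0) -
        C ((derivative B).eval y0) * derivative^[2] A) +
    (A + C (B.eval y0)) * (derivative^[2] A + C ((derivative^[2] B).eval y0)) -
    C (1 / 2) * (derivative A + C ((derivative B).eval y0)) ^ 2 - C (2 * lam ^ 2)

theorem orthoE_eval_eq (A B : ℝ[X]) (lam x y0 : ℝ) :
    orthoE (fun x => A.eval x) (fun y => B.eval y) lam x y0 = (orthoEPoly A B lam y0).eval x := by
  have deriv_eval_mul (p q : ℝ[X]) (t : ℝ) :
      deriv (fun s => p.eval s * q.eval s) t = (derivative (p * q)).eval t := by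
    simp only [← eval_mul, Polynomial.deriv]
  simp only [orthoE, orthoEPoly, iterate_deriv_eval_s2, deriv_eval_mul, Polynomial.deriv,
    eval_add, eval_sub, eval_mul, eval_pow, eval_C, eval_X]
  ring

theorem orthoEPoly_hasTopCoeff {A : ℝ[X]} {n : ℕ} {a : ℝ} (hA : A.HasTopCoeff (n + 3) a)
    (B : ℝ[X]) (lam y0 : ℝ) :
    (orthoEPoly A B lam y0).HasTopCoeff (2 * n + 4)
      ((n + 3) * (n + 1) ^ 2 * (2 * n + 3) / 2 * a ^ 2) := by
  have hA1 := hA.derivative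
  have hA2 := hA1.derivative
  have hA3 := hA2.derivative
  have hX := hasTopCoeff_X_sub_C y0
  unfold orthoEPoly
  generalize eval y0 B = b0, eval y0 (derivative B) = b1, eval y0 (derivative^[2] B) = b2,
    eval y0 (derivative^[3] B) = b3, eval y0 (derivative (B * derivative^[3] B)) = c
  have hAA3 := hA.mul hA3 (by omega : n + 3 + n = 2 * n + 3)
  have hQ1 := (hAA3.derivative.add ((hasTopCoeff_C c).of_lt (by omega))).add
    ((hA2.mul (hasTopCoeff_C b2) rfl).of_lt (by omega : n + 1 < 2 * n + 2))
  have hQ2 := ((hAA3.sub ((hasTopCoeff_C (b0 * b3)).of_lt (by omega))).add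
    ((hA1.mul (hasTopCoeff_C b2) rfl).of_lt (by omega : n + 2 < 2 * n + 3))).sub
    (((hasTopCoeff_C b1).mul hA2 rfl).of_lt (by omega : 0 + (n + 1) < 2 * n + 3))
  have hT1 := ((hX.pow 2).mul hQ1 (by omega : 2 * 1 + (2 * n + 2) = 2 * n + 4)).C_mul (1 / 2)
  have hT2 := hX.mul hQ2 (by omega : 1 + (2 * n + 3) = 2 * n + 4)
  have hT3 := (hA.add ((hasTopCoeff_C b0).of_lt (by omega))).mul
    (hA2.add ((hasTopCoeff_C b2).of_lt (by omega))) (by omega : n + 3 + (n + 1) = 2 * n + 4)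
  have hT4 := ((hA1.add ((hasTopCoeff_C b1).of_lt (by omega))).pow 2).C_mul (1 / 2)
  have h := (((hT1.sub hT2).add hT3).sub hT4).sub
    ((hasTopCoeff_C (2 * lam ^ 2)).of_lt (by omega : 0 < 2 * n + 4))
  refine ⟨h.1, h.2.trans ?_⟩
  push_cast
  ring

theorem stmt_2 (A B : Polynomial ℝ) (k : ℕ) (hk : 3 ≤ k)
    (hdeg : A.natDegree = k) (a0 : ℝ) (ha0 : a0 = A.leadingCoeff)
    (lam y0 : ℝ) :
    ∃ P : Polynomial ℝ,
      (∀ x : ℝ, orthoE (fun x => A.eval x) (fun y => B.eval y) lam x y0 = P.eval x) ∧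
      P.natDegree = 2 * k - 2 ∧
      P.coeff (2 * k - 2)
        = ((k : ℝ) * ((k : ℝ) - 2) ^ 2 * (2 * (k : ℝ) - 3) / 2) * a0 ^ 2 := by
  obtain ⟨n, rfl⟩ : ∃ n, k = n + 3 := ⟨k - 3, by omega⟩
  have ha0_ne : a0 ≠ 0 := by
    rw [ha0, Ne, leadingCoeff_eq_zero]
    rintro rfl
    simp at hdeg
  have hA : A.HasTopCoeff (n + 3) a0 := ⟨hdeg.le, by rw [ha0, leadingCoeff, hdeg]⟩
  have hP := orthoEPoly_hasTopCoeff hA B lam y0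
  have hc : ((n + 3) * (n + 1) ^ 2 * (2 * n + 3) / 2 * a0 ^ 2 : ℝ) ≠ 0 := by positivity
  refine ⟨orthoEPoly A B lam y0, fun x => orthoE_eval_eq A B lam x y0, ?_, ?_⟩
  · rw [hP.natDegree_eq hc]
    omega
  · rw [show 2 * (n + 3) - 2 = 2 * n + 4 by omega, hP.2]
    push_cast
    ring
end

section
/- Let y1 < y2 < x1 < x2 be real numbers and set a0 = −2/(x2−x1), a1 = 2(x1+x2)/(x2−x1), a2 = −2·x1·x2/(x2−x1), b0 = −2/(y2−y1), b1 = 2(y1+y2)/(y2−y1), b2 = −2·y1·y2/(y2−y1) (the coefficients of A₀(x) = −(2/(x2−x1))(x−x1)(x−x2) and B₀(y) = −(2/(y2−y1))(y−y1)(y−y2)). Then the quadratic f(t) := 4(t·a0+b0)(t·a2+b2) − (t·a1+b1)² in the variable t has negative leading coefficient and two distinct real roots t₋ < t₊, both of which are positive, and f(t) > 0 for every t with t₋ < t < t₊. -/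
theorem stmt_5 (x1 x2 y1 y2 : ℝ) (h1 : y1 < y2) (h2 : y2 < x1) (h3 : x1 < x2)
    (a0 a1 a2 b0 b1 b2 : ℝ)
    (ha0 : a0 = -2 / (x2 - x1)) (ha1 : a1 = 2 * (x1 + x2) / (x2 - x1))
    (ha2 : a2 = -2 * x1 * x2 / (x2 - x1))
    (hb0 : b0 = -2 / (y2 - y1)) (hb1 : b1 = 2 * (y1 + y2) / (y2 - y1))
    (hb2 : b2 = -2 * y1 * y2 / (y2 - y1))
    (f : ℝ → ℝ)
    (hf : ∀ t, f t = 4 * (t * a0 + b0) * (t * a2 + b2) - (t * a1 + b1) ^ 2) :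
    -- `f` has negative leading coefficient ...
    4 * a0 * a2 - a1 ^ 2 < 0 ∧
    -- ... and two distinct real roots `t₋ < t₊`, both positive, with `f > 0` in between.
    ∃ tm tp : ℝ, 0 < tm ∧ tm < tp ∧ f tm = 0 ∧ f tp = 0 ∧
      (∀ t : ℝ, f t = 0 → t = tm ∨ t = tp) ∧
      (∀ t : ℝ, tm < t → t < tp → 0 < f t) := by
  have hd : (0:ℝ) < x2 - x1 := by linarith
  have he : (0:ℝ) < y2 - y1 := by linarith
  have hd' : x2 - x1 ≠ 0 := ne_of_gt hd
  have he' : y2 - y1 ≠ 0 := ne_of_gt he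
  set c : ℝ := 8 * ((x1 - y1) * (x2 - y2) + (x1 - y2) * (x2 - y1)) /
      ((x2 - x1) * (y2 - y1)) with hc
  have hkey : ∀ t, f t = -4 * t ^ 2 + c * t - 4 := by
    intro t
    rw [hf t, ha0, ha1, ha2, hb0, hb1, hb2, hc]
    field_simp
    ring
  have hc8 : (8:ℝ) < c := by
    have hcalt : c = 8 + 16 * (x1 - y2) * (x2 - y1) / ((x2 - x1) * (y2 - y1)) := by
      rw [hc]; field_simp; ring
    have hpos : 0 < 16 * (x1 - y2) * (x2 - y1) / ((x2 - x1) * (y2 - y1)) := by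
      apply div_pos (by nlinarith) (by positivity)
    linarith
  have hlead : 4 * a0 * a2 - a1 ^ 2 = -4 := by
    rw [ha0, ha1, ha2]; field_simp; ring
  have hD : (0:ℝ) < c ^ 2 - 64 := by nlinarith
  set s : ℝ := Real.sqrt (c ^ 2 - 64) with hs
  have hs2 : s ^ 2 = c ^ 2 - 64 := Real.sq_sqrt (le_of_lt hD)
  have hs0 : 0 < s := Real.sqrt_pos.mpr hD
  have hsc : s < c := by nlinarith
  refine ⟨by rw [hlead]; norm_num, (c - s) / 8, (c + s) / 8, by linarith, by linarith, ?_, ?_, ?_, ?_⟩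
  · rw [hkey]; linear_combination (-1/16 : ℝ) * hs2
  · rw [hkey]; linear_combination (-1/16 : ℝ) * hs2
  · intro t ht
    rw [hkey] at ht
    have hfac : (t - (c - s) / 8) * (t - (c + s) / 8) = 0 := by
      linear_combination (-1/4 : ℝ) * ht + (-1/64 : ℝ) * hs2
    rcases mul_eq_zero.mp hfac with h | h
    · left; linarith
    · right; linarith
  · intro t h4 h5
    rw [hkey]
    nlinarith [hs2]
end

section
/- Let y1 < y2 < x1 < x2 be real numbers and define A₀(x) := −(2/(x2−x1))(x−x1)(x−x2) and B₀(y) := −(2/(y2−y1))(y−y1)(y−y2). Then there exist real numbers t > 0 and λ > 0 such that E(t·A₀, B₀, λ)(x,y) = 0 for all real x, y. Moreover, there are exactly two positive real numbers t for which E(t·A₀, B₀, 0) vanishes identically. -/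
section Quadratic

variable (α a b : ℝ)

lemma deriv_const_mul_sub_mul_sub :
    deriv (fun x => α * ((x - a) * (x - b))) = fun x => α * (2 * x - a - b) := by
  funext x
  have h : HasDerivAt (fun x => α * ((x - a) * (x - b))) (α * (1 * (x - b) + (x - a) * 1)) x :=
    (((hasDerivAt_id' x).sub_const a).mul ((hasDerivAt_id' x).sub_const b)).const_mul α
  rw [h.deriv]
  ring

lemma iter_deriv_two_const_mul_sub_mul_sub :
    deriv^[2] (fun x => α * ((x - a) * (x - b))) = fun _ => 2 * α := by
  funext x
  simp only [Function.iterate_succ, Function.iterate_zero, Function.comp_apply, id,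
    deriv_const_mul_sub_mul_sub]
  have h : HasDerivAt (fun x => α * (2 * x - a - b)) (α * (2 * 1)) x :=
    ((((hasDerivAt_id' x).const_mul 2).sub_const a).sub_const b).const_mul α
  rw [h.deriv]
  ring

lemma iter_deriv_three_const_mul_sub_mul_sub :
    deriv^[3] (fun x => α * ((x - a) * (x - b))) = fun _ => 0 := by
  rw [Function.iterate_succ_apply', iter_deriv_two_const_mul_sub_mul_sub]
  exact deriv_const' _

end Quadratic

lemma orthoE_const_mul_sub_mul_sub (α x1 x2 β y1 y2 lam x y : ℝ) :
    orthoE (fun x => α * ((x - x1) * (x - x2))) (fun y => β * ((y - y1) * (y - y2))) lam x y =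
      α * β * ((x1 - y1) * (x2 - y2) + (x1 - y2) * (x2 - y1)) -
        (α ^ 2 * (x2 - x1) ^ 2 + β ^ 2 * (y2 - y1) ^ 2) / 2 - 2 * lam ^ 2 := by
  simp only [orthoE, iter_deriv_three_const_mul_sub_mul_sub,
    iter_deriv_two_const_mul_sub_mul_sub, deriv_const_mul_sub_mul_sub, mul_zero, deriv_const']
  ring

lemma exists_orthoE_scaled_eq (x1 x2 y1 y2 : ℝ) (h1 : y1 < y2) (h2 : y2 < x1) (h3 : x1 < x2)
    (A0 B0 : ℝ → ℝ)
    (hA0 : ∀ x, A0 x = -(2 / (x2 - x1)) * ((x - x1) * (x - x2)))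
    (hB0 : ∀ y, B0 y = -(2 / (y2 - y1)) * ((y - y1) * (y - y2))) :
    ∃ N : ℝ, 2 < N ∧ ∀ t lam x y : ℝ,
      orthoE (fun x => t * A0 x) B0 lam x y = -2 * (t ^ 2 - N * t + 1 + lam ^ 2) := by
  have hx : 0 < x2 - x1 := by linarith
  have hy : 0 < y2 - y1 := by linarith
  refine ⟨2 + 4 * ((x1 - y2) * (x2 - y1)) / ((x2 - x1) * (y2 - y1)), ?_, fun t lam x y => ?_⟩
  · have : 0 < (x1 - y2) * (x2 - y1) := mul_pos (by linarith) (by linarith)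
    have := div_pos (mul_pos four_pos this) (mul_pos hx hy)
    linarith
  · have hA : (fun x => t * A0 x) = fun x => t * -(2 / (x2 - x1)) * ((x - x1) * (x - x2)) :=
      funext fun x => by rw [hA0, mul_assoc]
    rw [hA, funext hB0, orthoE_const_mul_sub_mul_sub]
    field_simp
    ring

section RootsOfQuadratic

variable {N : ℝ} (hN : 2 < N)
include hN

lemma exists_pos_sq_sub_mul_add_one_add_sq_eq_zero :
    ∃ t lam : ℝ, 0 < t ∧ 0 < lam ∧ t ^ 2 - N * t + 1 + lam ^ 2 = 0 := by
  have hpos : 0 < N ^ 2 / 4 - 1 := by nlinarith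
  refine ⟨N / 2, √(N ^ 2 / 4 - 1), by linarith, Real.sqrt_pos.2 hpos, ?_⟩
  rw [Real.sq_sqrt hpos.le]
  ring

lemma exists_pos_roots_sq_sub_mul_add_one :
    ∃ t1 t2 : ℝ, 0 < t1 ∧ 0 < t2 ∧ t1 ≠ t2 ∧
      ∀ t : ℝ, t ^ 2 - N * t + 1 = 0 ↔ t = t1 ∨ t = t2 := by
  have hdisc : 0 < N ^ 2 - 4 := by nlinarith
  set s := √(N ^ 2 - 4)
  have hs : s * s = N ^ 2 - 4 := Real.mul_self_sqrt hdisc.le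
  have hs0 : 0 < s := Real.sqrt_pos.2 hdisc
  have hsN : s < N := by nlinarith
  refine ⟨(N + s) / 2, (N - s) / 2, by linarith, by linarith, by linarith, fun t => ?_⟩
  have hfactor : t ^ 2 - N * t + 1 = (t - (N + s) / 2) * (t - (N - s) / 2) := by
    linear_combination hs / 4
  rw [hfactor, mul_eq_zero, sub_eq_zero, sub_eq_zero]

end RootsOfQuadratic

theorem stmt_6 (x1 x2 y1 y2 : ℝ) (h1 : y1 < y2) (h2 : y2 < x1) (h3 : x1 < x2)
    (A0 B0 : ℝ → ℝ)
    (hA0 : ∀ x, A0 x = -(2 / (x2 - x1)) * ((x - x1) * (x - x2)))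
    (hB0 : ∀ y, B0 y = -(2 / (y2 - y1)) * ((y - y1) * (y - y2))) :
    -- there is a scaling `t > 0` and a parameter `λ > 0` with `E(t·A₀, B₀, λ) ≡ 0` ...
    (∃ t lam : ℝ, 0 < t ∧ 0 < lam ∧
        ∀ x y : ℝ, orthoE (fun x => t * A0 x) B0 lam x y = 0) ∧
    -- ... and exactly two positive scalings `t` with `E(t·A₀, B₀, 0) ≡ 0`.
    (∃ t1 t2 : ℝ, 0 < t1 ∧ 0 < t2 ∧ t1 ≠ t2 ∧
        ∀ t : ℝ, 0 < t →
          ((∀ x y : ℝ, orthoE (fun x => t * A0 x) B0 0 x y = 0) ↔ t = t1 ∨ t = t2)) := by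
  obtain ⟨N, hN, hE⟩ := exists_orthoE_scaled_eq x1 x2 y1 y2 h1 h2 h3 A0 B0 hA0 hB0
  constructor
  · obtain ⟨t, lam, ht, hlam, hroot⟩ := exists_pos_sq_sub_mul_add_one_add_sq_eq_zero hN
    exact ⟨t, lam, ht, hlam, fun x y => by rw [hE, hroot, mul_zero]⟩
  · obtain ⟨t1, t2, ht1, ht2, hne, hroots⟩ := exists_pos_roots_sq_sub_mul_add_one hN
    refine ⟨t1, t2, ht1, ht2, hne, fun t _ => ?_⟩
    simp [hE, ← hroots]
end

section
/- Let a, b, c be positive real numbers with d := −a + b − c ≠ 0, and define A(x) := −(x−1)(x − c/d) and B(y) := −(ab/(cd))·(y + c/a)(y − c/b). Then E(A,B,0)(x,y) = 0 for all real x and y. -/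
section Quadratic

variable (p q r : ℝ)

theorem deriv_quadratic_s7 :
    deriv (fun t : ℝ => p * t ^ 2 + q * t + r) = fun t => 2 * p * t + q := by
  ext t
  have h := (((hasDerivAt_pow 2 t).const_mul p).add ((hasDerivAt_id t).const_mul q)).add_const r
  convert h.deriv using 1
  norm_num
  ring

theorem iter_deriv_two_quadratic :
    deriv^[2] (fun t : ℝ => p * t ^ 2 + q * t + r) = fun _ => 2 * p := by
  show deriv (deriv _) = _
  rw [deriv_quadratic_s7]
  ext t
  simp

theorem iter_deriv_three_quadratic :
    deriv^[3] (fun t : ℝ => p * t ^ 2 + q * t + r) = fun _ => 0 := by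
  show deriv (deriv^[2] _) = _
  rw [iter_deriv_two_quadratic]
  ext t
  simp

end Quadratic

theorem orthoE_quadratic_s7 (p q r P Q R lam x y : ℝ) :
    orthoE (fun t => p * t ^ 2 + q * t + r) (fun t => P * t ^ 2 + Q * t + R) lam x y =
      2 * (p + P) * (r + R) - (q + Q) ^ 2 / 2 - 2 * lam ^ 2 := by
  simp only [orthoE, deriv_quadratic_s7, iter_deriv_two_quadratic,
    iter_deriv_three_quadratic, mul_zero, deriv_const']
  ring

theorem stmt_7 (a b c : ℝ) (ha : 0 < a) (hb : 0 < b) (hc : 0 < c)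
    (d : ℝ) (hd : d = -a + b - c) (hd0 : d ≠ 0)
    (A B : ℝ → ℝ)
    (hA : ∀ x, A x = -((x - 1) * (x - c / d)))
    (hB : ∀ y, B y = -(a * b / (c * d)) * ((y + c / a) * (y - c / b))) :
    ∀ x y : ℝ, orthoE A B 0 x y = 0 := by
  intro x y
  have hA' : A = fun t => -1 * t ^ 2 + (1 + c / d) * t + -(c / d) := by
    ext t
    rw [hA]
    ring
  have hB' : B = fun t => -(a * b / (c * d)) * t ^ 2 + (a - b) / d * t + c / d := by
    ext t
    rw [hB]
    field_simp
    ring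
  have hlinear : 1 + c / d + (a - b) / d = 0 := by
    field_simp
    linarith
  rw [hA', hB', orthoE_quadratic_s7, hlinear, neg_add_cancel]
  ring
end

section
/- Let c, v, w be positive real numbers with v ≠ w, let s, λ be real numbers, and let V : ℝ → ℝ be four times continuously differentiable with V(−1) = V(1) = 0, V′(−1) = 2c/w and V′(1) = −2c/v. Then it is not the case that both ∫_{−1}^{1} F(z) dz = 0 and ∫_{−1}^{1} z·F(z) dz = 0. -/
/-- The Calabi-ansatz quantity `F(z) = (1/c²)·(V‴·V)′(z) − (s/c²)·V″(z) − λ²/c⁴`,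
which equals `4𝒮(ω)` for the Calabi ansatz with momentum profile `V` on the product
orbifold surface `ℙ¹_{v,w} × Σ` over a curve of constant scalar curvature `s`. -/
noncomputable def calabiF (c s lam : ℝ) (V : ℝ → ℝ) (z : ℝ) : ℝ :=
  (1 / c ^ 2) * deriv (fun t => deriv^[3] V t * V t) z
    - (s / c ^ 2) * deriv^[2] V z - lam ^ 2 / c ^ 4

/-!
Both integrals are computed from explicit antiderivatives: `F` is the derivative of
`(V‴V − sV′)/c² − λ²z/c⁴`, and `zF` that of
`(zV‴V − V″V + V′²/2 − s(zV′ − V))/c² − λ²z²/(2c⁴)`.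
Since `V(±1) = 0`, only the `V′` terms survive at the endpoints, and `∫ zF = 0` becomes
`(v − w)(c(v + w) + svw) = 0`. For `v ≠ w` this forces `svw = −c(v + w)`, and then
`∫ F = 0` turns into `λ²v²w² + c⁴(v + w)² = 0`, which is impossible.
-/

section IteratedDerivatives

variable {f : ℝ → ℝ} {m : ℕ}

theorem ContDiff.continuous_iterate_deriv (hf : ContDiff ℝ m f) {n : ℕ} (hn : n ≤ m) :
    Continuous (deriv^[n] f) :=
  (ContDiff.iterate_deriv' 0 n (hf.of_le (by exact_mod_cast (by omega : 0 + n ≤ m)))).continuous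

theorem ContDiff.hasDerivAt_iterate_deriv (hf : ContDiff ℝ m f) {n : ℕ} (hn : n < m) (x : ℝ) :
    HasDerivAt (deriv^[n] f) (deriv^[n + 1] f x) x := by
  have h : ContDiff ℝ 1 (deriv^[n] f) :=
    ContDiff.iterate_deriv' 1 n (hf.of_le (by exact_mod_cast (by omega : 1 + n ≤ m)))
  rw [Function.iterate_succ_apply']
  exact (h.differentiable one_ne_zero x).hasDerivAt

end IteratedDerivatives

namespace CalabiF

variable {c s lam : ℝ} {V : ℝ → ℝ}

theorem hasDerivAt_iterate_deriv_three_mul (hV : ContDiff ℝ 4 V) (x : ℝ) :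
    HasDerivAt (fun t => deriv^[3] V t * V t)
      (deriv^[4] V x * V x + deriv^[3] V x * deriv V x) x :=
  (hV.hasDerivAt_iterate_deriv (n := 3) (by norm_num) x).mul
    (hV.hasDerivAt_iterate_deriv (n := 0) (by norm_num) x)

theorem calabiF_eq (hV : ContDiff ℝ 4 V) (z : ℝ) :
    calabiF c s lam V z = (1 / c ^ 2) * (deriv^[4] V z * V z + deriv^[3] V z * deriv V z)
      - (s / c ^ 2) * deriv^[2] V z - lam ^ 2 / c ^ 4 := by
  rw [calabiF, (hasDerivAt_iterate_deriv_three_mul hV z).deriv]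

theorem continuous_calabiF (hV : ContDiff ℝ 4 V) : Continuous (calabiF c s lam V) := by
  have h2 := hV.continuous_iterate_deriv (n := 2) (by norm_num)
  have h3 := hV.continuous_iterate_deriv (n := 3) (by norm_num)
  have h4 := hV.continuous_iterate_deriv (n := 4) (by norm_num)
  have h1 : Continuous (deriv V) := hV.continuous_deriv (by norm_num)
  rw [funext (calabiF_eq hV)]
  fun_prop

theorem integral_calabiF (hV : ContDiff ℝ 4 V) {a b : ℝ} (ha : V a = 0) (hb : V b = 0) :
    ∫ z in a..b, calabiF c s lam V z =
      -(s / c ^ 2) * (deriv V b - deriv V a) - lam ^ 2 / c ^ 4 * (b - a) := by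
  have hG : ∀ x ∈ Set.uIcc a b, HasDerivAt
      (fun z => (1 / c ^ 2) * (deriv^[3] V z * V z) - (s / c ^ 2) * deriv V z
        - lam ^ 2 / c ^ 4 * z) (calabiF c s lam V x) x := by
    intro x _
    rw [calabiF_eq hV]
    exact (((hasDerivAt_iterate_deriv_three_mul hV x).const_mul _).sub
      ((hV.hasDerivAt_iterate_deriv (n := 1) (by norm_num) x).const_mul _)).sub
      ((hasDerivAt_id x).const_mul _) |>.congr_deriv (by simp)
  rw [intervalIntegral.integral_eq_sub_of_hasDerivAt hG
    ((continuous_calabiF hV).intervalIntegrable a b), ha, hb]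
  ring

theorem integral_mul_calabiF (hV : ContDiff ℝ 4 V) {a b : ℝ} (ha : V a = 0) (hb : V b = 0) :
    ∫ z in a..b, z * calabiF c s lam V z =
      (1 / c ^ 2) * ((deriv V b ^ 2 - deriv V a ^ 2) / 2)
        - (s / c ^ 2) * (b * deriv V b - a * deriv V a)
        - lam ^ 2 / c ^ 4 * ((b ^ 2 - a ^ 2) / 2) := by
  have hG : ∀ x ∈ Set.uIcc a b, HasDerivAt
      (fun z => (1 / c ^ 2) * (z * (deriv^[3] V z * V z) - deriv^[2] V z * V z
          + deriv V z ^ 2 / 2)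
        - (s / c ^ 2) * (z * deriv V z - V z) - lam ^ 2 / c ^ 4 * (z ^ 2 / 2))
      (x * calabiF c s lam V x) x := by
    intro x _
    have hV0 := hV.hasDerivAt_iterate_deriv (n := 0) (by norm_num) x
    have hV1 := hV.hasDerivAt_iterate_deriv (n := 1) (by norm_num) x
    have hV2 := hV.hasDerivAt_iterate_deriv (n := 2) (by norm_num) x
    simp only [Function.iterate_zero, Function.iterate_one, id_eq, zero_add] at hV0 hV1
    rw [calabiF_eq hV]
    refine (((((hasDerivAt_id x).mul (hasDerivAt_iterate_deriv_three_mul hV x)).sub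
      (hV2.mul hV0)).add ((hV1.pow 2).div_const 2)).const_mul _).sub
      (((hasDerivAt_id x).mul hV1).sub hV0 |>.const_mul _) |>.sub
      (((hasDerivAt_pow 2 x).div_const 2).const_mul _) |>.congr_deriv ?_
    simp only [id_eq]
    push_cast
    ring
  rw [intervalIntegral.integral_eq_sub_of_hasDerivAt hG
    ((continuous_id.mul (continuous_calabiF hV)).intervalIntegrable a b), ha, hb]
  ring

end CalabiF

open CalabiF in
theorem stmt_8 (c v w : ℝ) (hc : 0 < c) (hv : 0 < v) (hw : 0 < w) (hvw : v ≠ w)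
    (s lam : ℝ) (V : ℝ → ℝ) (hV : ContDiff ℝ 4 V)
    (hVm : V (-1) = 0) (hVp : V 1 = 0)
    (hV'm : deriv V (-1) = 2 * c / w) (hV'p : deriv V 1 = -(2 * c) / v) :
    ¬ ((∫ z in (-1 : ℝ)..1, calabiF c s lam V z) = 0 ∧
       (∫ z in (-1 : ℝ)..1, z * calabiF c s lam V z) = 0) := by
  rintro ⟨h0, h1⟩
  rw [integral_calabiF hV hVm hVp, hV'm, hV'p] at h0
  rw [integral_mul_calabiF hV hVm hVp, hV'm, hV'p] at h1
  field_simp at h0 h1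
  have hs : c * (v + w) + s * v * w = 0 := by
    have hfac : c ^ 3 * 4 * ((v - w) * (c * (v + w) + s * v * w)) = 0 := by
      linear_combination -h1
    simpa [hc.ne', sub_ne_zero.mpr hvw] using hfac
  have hsum : lam ^ 2 * (v * w) ^ 2 + c ^ 4 * (v + w) ^ 2 = 0 := by
    linear_combination (-(v * w) / 2) * h0 + c ^ 3 * (v + w) * hs
  exact (by positivity : 0 < lam ^ 2 * (v * w) ^ 2 + c ^ 4 * (v + w) ^ 2).ne' hsum
end

section
/- Let c, v, w be positive real numbers, let s, λ be real numbers, and let V : ℝ → ℝ be four times continuously differentiable with V(−1) = V(1) = 0, V′(−1) = 2c/w and V′(1) = −2c/v. Then ∫_{−1}^{1} z·F(z) dz = 2·(1/v² − 1/w²) + (2s/c)·(1/v − 1/w). -/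
section IterateDeriv

variable {V : ℝ → ℝ}

theorem hasDerivAt_iterate_deriv {n k : ℕ} (hV : ContDiff ℝ n V) (hk : k + 1 ≤ n) (z : ℝ) :
    HasDerivAt (deriv^[k] V) (deriv^[k + 1] V z) z := by
  have hVk : ContDiff ℝ 1 (deriv^[k] V) :=
    ContDiff.iterate_deriv' 1 k (hV.of_le (by rw [add_comm]; exact_mod_cast hk))
  rw [Function.iterate_succ_apply']
  exact (hVk.differentiable one_ne_zero z).hasDerivAt

theorem hasDerivAt_primitive_mul_deriv_iterate_deriv_three_mul (hV : ContDiff ℝ 4 V) (z : ℝ) :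
    HasDerivAt
      (fun t => t * (deriv^[3] V t * V t) - deriv^[2] V t * V t + deriv V t ^ 2 / 2)
      (z * deriv (fun t => deriv^[3] V t * V t) z) z := by
  have h1 : HasDerivAt V (deriv V z) z := hasDerivAt_iterate_deriv (k := 0) hV (by norm_num) z
  have h2 : HasDerivAt (deriv V) (deriv^[2] V z) z :=
    hasDerivAt_iterate_deriv (k := 1) hV (by norm_num) z
  have h3 : HasDerivAt (deriv^[2] V) (deriv^[3] V z) z :=
    hasDerivAt_iterate_deriv (k := 2) hV (by norm_num) z
  have h4 : HasDerivAt (deriv^[3] V) (deriv^[4] V z) z :=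
    hasDerivAt_iterate_deriv (k := 3) hV (by norm_num) z
  have hprod : HasDerivAt (fun t => deriv^[3] V t * V t)
      (deriv^[4] V z * V z + deriv^[3] V z * deriv V z) z := h4.mul h1
  rw [hprod.deriv]
  refine ((((hasDerivAt_id z).mul hprod).sub (h3.mul h1)).add
    ((h2.pow 2).div_const 2)).congr_deriv ?_
  simp only [id]
  ring

theorem hasDerivAt_primitive_mul_iterate_deriv_two (hV : ContDiff ℝ 2 V) (z : ℝ) :
    HasDerivAt (fun t => t * deriv V t - V t) (z * deriv^[2] V z) z := by
  have h1 : HasDerivAt V (deriv V z) z := hasDerivAt_iterate_deriv (k := 0) hV (by norm_num) z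
  have h2 : HasDerivAt (deriv V) (deriv^[2] V z) z :=
    hasDerivAt_iterate_deriv (k := 1) hV (by norm_num) z
  refine (((hasDerivAt_id z).mul h2).sub h1).congr_deriv ?_
  simp only [id]
  ring

end IterateDeriv

section CalabiF

variable {c s lam : ℝ} {V : ℝ → ℝ}

noncomputable def calabiMomentPrimitive (c s lam : ℝ) (V : ℝ → ℝ) (t : ℝ) : ℝ :=
  (1 / c ^ 2) * (t * (deriv^[3] V t * V t) - deriv^[2] V t * V t + deriv V t ^ 2 / 2)
    - (s / c ^ 2) * (t * deriv V t - V t) - lam ^ 2 * t ^ 2 / (2 * c ^ 4)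

theorem hasDerivAt_calabiMomentPrimitive (hV : ContDiff ℝ 4 V) (z : ℝ) :
    HasDerivAt (calabiMomentPrimitive c s lam V) (z * calabiF c s lam V z) z := by
  have hlam : HasDerivAt (fun t : ℝ => lam ^ 2 * t ^ 2 / (2 * c ^ 4))
      (lam ^ 2 * (2 * z ^ 1) / (2 * c ^ 4)) z :=
    ((hasDerivAt_pow 2 z).const_mul (lam ^ 2)).div_const (2 * c ^ 4)
  have hV3 := hasDerivAt_primitive_mul_deriv_iterate_deriv_three_mul hV z
  have hV2 := hasDerivAt_primitive_mul_iterate_deriv_two (hV.of_le (by norm_num)) z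
  refine (((hV3.const_mul (1 / c ^ 2)).sub (hV2.const_mul (s / c ^ 2))).sub hlam).congr_deriv ?_
  rw [calabiF]
  ring

theorem continuous_calabiF (hV : ContDiff ℝ 4 V) : Continuous (calabiF c s lam V) := by
  have hprod : Continuous (deriv fun t => deriv^[3] V t * V t) :=
    ((ContDiff.iterate_deriv' 1 3 hV).mul (hV.of_le (by norm_num))).continuous_deriv le_rfl
  have hV2 : Continuous (deriv^[2] V) := (ContDiff.iterate_deriv' 2 2 hV).continuous
  unfold calabiF
  fun_prop

theorem integral_mul_calabiF (hV : ContDiff ℝ 4 V) (a b : ℝ) :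
    ∫ z in a..b, z * calabiF c s lam V z
      = calabiMomentPrimitive c s lam V b - calabiMomentPrimitive c s lam V a :=
  intervalIntegral.integral_eq_sub_of_hasDerivAt
    (fun z _ => hasDerivAt_calabiMomentPrimitive hV z)
    ((continuous_id.mul (continuous_calabiF hV)).intervalIntegrable a b)

end CalabiF

theorem stmt_10_general (c v w : ℝ) (hc : 0 < c)
    (s lam : ℝ) (V : ℝ → ℝ) (hV : ContDiff ℝ 4 V)
    (hVm : V (-1) = 0) (hVp : V 1 = 0)
    (hV'm : deriv V (-1) = 2 * c / w) (hV'p : deriv V 1 = -(2 * c) / v) :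
    (∫ z in (-1 : ℝ)..1, z * calabiF c s lam V z)
      = 2 * (1 / v ^ 2 - 1 / w ^ 2) + (2 * s / c) * (1 / v - 1 / w) := by
  rw [integral_mul_calabiF hV, calabiMomentPrimitive, calabiMomentPrimitive]
  simp only [hVm, hVp, hV'm, hV'p]
  field_simp
  ring

theorem stmt_10 (c v w : ℝ) (hc : 0 < c) (hv : 0 < v) (hw : 0 < w)
    (s lam : ℝ) (V : ℝ → ℝ) (hV : ContDiff ℝ 4 V)
    (hVm : V (-1) = 0) (hVp : V 1 = 0)
    (hV'm : deriv V (-1) = 2 * c / w) (hV'p : deriv V 1 = -(2 * c) / v) :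
    (∫ z in (-1 : ℝ)..1, z * calabiF c s lam V z)
      = 2 * (1 / v ^ 2 - 1 / w ^ 2) + (2 * s / c) * (1 / v - 1 / w) :=
  stmt_10_general c v w hc s lam V hV hVm hVp hV'm hV'p
end
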